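/- Let E be a linearly ordered set with least element 0, let Y be a finite set with an E-valued ultrametric d, let X ⊆ Y, and let ⪯ be a linear order on X that is convex for the subspace X (every ball of the subspace X is an interval with respect to ⪯). Then there exists a linear order ⪯' on Y extending ⪯ that is convex on Y (every ball of Y is an interval with respect to ⪯'). -/

import Mathlib

/-- An `E`-valued ultrametric on `Y`, where the least element `⊥` of `E` plays the
role of `0`. -/
def IsUltrametric {Y E : Type*} [LinearOrder E] [OrderBot E] (d : Y → Y → E) : Prop :=
  (∀ x y, d x y = ⊥ ↔ x = y) ∧ (∀ x y, d x y = d y x) ∧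
  (∀ x y z, d x z ≤ max (d x y) (d y z))

/-- `le` is a linear order on the set `s`. -/
def IsLinearOrderOn {Y : Type*} (s : Set Y) (le : Y → Y → Prop) : Prop :=
  (∀ x ∈ s, le x x) ∧
  (∀ x ∈ s, ∀ y ∈ s, le x y → le y x → x = y) ∧
  (∀ x ∈ s, ∀ y ∈ s, ∀ z ∈ s, le x y → le y z → le x z) ∧
  (∀ x ∈ s, ∀ y ∈ s, le x y ∨ le y x)

/-- `le` is convex on the subspace `s`: every (open or closed) ball of the subspace `s`
is an interval with respect to `le`. -/
def IsConvexOn {Y E : Type*} [LinearOrder E] [OrderBot E]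
    (d : Y → Y → E) (s : Set Y) (le : Y → Y → Prop) : Prop :=
  ∀ a ∈ s, ∀ r : E,
    (∀ x ∈ s, ∀ y ∈ s, ∀ z ∈ s,
      d x a < r → d z a < r → le x y → le y z → d y a < r) ∧
    (∀ x ∈ s, ∀ y ∈ s, ∀ z ∈ s,
      d x a ≤ r → d z a ≤ r → le x y → le y z → d y a ≤ r)

/-- The extension of `le` by inserting `p` just after `c`. -/
def extOrd {Y : Type*} (le : Y → Y → Prop) (p c : Y) : Y → Y → Prop := fun x y =>
  (x = p ∧ (y = p ∨ (le c y ∧ y ≠ c))) ∨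
  (x ≠ p ∧ ((y = p ∧ le x c) ∨ (y ≠ p ∧ le x y)))

section aux
variable {Y E : Type*} [LinearOrder E] [OrderBot E]

lemma extOrd_pp (le : Y → Y → Prop) (p c : Y) : extOrd le p c p p :=
  Or.inl ⟨rfl, Or.inl rfl⟩

lemma extOrd_pu {le : Y → Y → Prop} {p c u : Y} (hu : u ≠ p) :
    extOrd le p c p u ↔ (le c u ∧ u ≠ c) := by
  constructor
  · rintro (⟨-, h | h⟩ | ⟨hne, -⟩)
    · exact absurd h hu
    · exact h
    · exact absurd rfl hne
  · intro h; exact Or.inl ⟨rfl, Or.inr h⟩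

lemma extOrd_up {le : Y → Y → Prop} {p c u : Y} (hu : u ≠ p) :
    extOrd le p c u p ↔ le u c := by
  constructor
  · rintro (⟨h, -⟩ | ⟨-, ⟨-, h⟩ | ⟨h, -⟩⟩)
    · exact absurd h hu
    · exact h
    · exact absurd rfl h
  · intro h; exact Or.inr ⟨hu, Or.inl ⟨rfl, h⟩⟩

lemma extOrd_uv {le : Y → Y → Prop} {p c u v : Y} (hu : u ≠ p) (hv : v ≠ p) :
    extOrd le p c u v ↔ le u v := by
  constructor
  · rintro (⟨h, -⟩ | ⟨-, ⟨h, -⟩ | ⟨-, h⟩⟩)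
    · exact absurd h hu
    · exact absurd h hv
    · exact h
  · intro h; exact Or.inr ⟨hu, Or.inr ⟨hv, h⟩⟩

/-- Existence of a greatest element of a finite nonempty subset. -/
lemma exists_greatest {s : Set Y} {le : Y → Y → Prop}
    (hrefl : ∀ x ∈ s, le x x)
    (htrans : ∀ x ∈ s, ∀ y ∈ s, ∀ z ∈ s, le x y → le y z → le x z)
    (htot : ∀ x ∈ s, ∀ y ∈ s, le x y ∨ le y x) :
    ∀ t : Set Y, t.Finite → t ⊆ s → t.Nonempty → ∃ c ∈ t, ∀ x ∈ t, le x c := by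
  intro t ht
  refine Set.Finite.induction_on t ht (fun _ hne => absurd rfl hne.ne_empty) ?_
  intro a t hat htf IH hsub hne
  rcases t.eq_empty_or_nonempty with rfl | htne
  · refine ⟨a, Set.mem_insert _ _, ?_⟩
    rintro x (rfl | hx)
    · exact hrefl _ (hsub (Set.mem_insert _ _))
    · exact absurd hx (Set.notMem_empty x)
  · obtain ⟨c, hct, hc⟩ := IH (fun x hx => hsub (Set.mem_insert_of_mem _ hx)) htne
    have has : a ∈ s := hsub (Set.mem_insert _ _)
    have hcs : c ∈ s := hsub (Set.mem_insert_of_mem _ hct)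
    rcases htot a has c hcs with h | h
    · refine ⟨c, Set.mem_insert_of_mem _ hct, ?_⟩
      rintro x (rfl | hx)
      · exact h
      · exact hc x hx
    · refine ⟨a, Set.mem_insert _ _, ?_⟩
      rintro x (rfl | hx)
      · exact hrefl _ has
      · exact htrans x (hsub (Set.mem_insert_of_mem _ hx)) c hcs a has (hc x hx) h

/-- The core convexity computation, parametric in the relation `R` (which will be
instantiated with `<` and `≤`). -/
lemma core_convex (d : Y → Y → E)
    (hsymm : ∀ x y, d x y = d y x) (htri : ∀ x y z, d x z ≤ max (d x y) (d y z))
    (hself : ∀ x, d x x = ⊥)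
    (s : Set Y) (le : Y → Y → Prop)
    (hanti : ∀ x ∈ s, ∀ y ∈ s, le x y → le y x → x = y)
    (htrans : ∀ x ∈ s, ∀ y ∈ s, ∀ z ∈ s, le x y → le y z → le x z)
    (p : Y) (hp : p ∉ s) (x₀ : Y) (hx₀ : x₀ ∈ s) (hmin : ∀ x ∈ s, d p x₀ ≤ d p x)
    (c : Y) (hcs : c ∈ s) (hcC : d c x₀ ≤ d p x₀)
    (hcmax : ∀ x ∈ s, d x x₀ ≤ d p x₀ → le x c)
    (R : E → E → Prop)
    (h1 : ∀ {e f g : E}, e ≤ f → R f g → R e g)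
    (h2 : ∀ {e f g : E}, R e g → R f g → R (max e f) g)
    (h3 : ∀ {e f g : E}, R e g → ¬ R f g → e ≤ f)
    (r : E)
    (hconvR : ∀ a ∈ s, ∀ x ∈ s, ∀ y ∈ s, ∀ z ∈ s,
      R (d x a) r → R (d z a) r → le x y → le y z → R (d y a) r)
    (a : Y) (ha : a ∈ insert p s) :
    ∀ x ∈ insert p s, ∀ y ∈ insert p s, ∀ z ∈ insert p s,
      R (d x a) r → R (d z a) r → extOrd le p c x y → extOrd le p c y z →
      R (d y a) r := by
  have hpc : d p c ≤ d p x₀ := by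
    refine (htri p x₀ c).trans ?_
    rw [hsymm x₀ c]
    exact max_le le_rfl hcC
  intro x hx y hy z hz hxr hzr hxy hyz
  have memcase : ∀ u : Y, u ∈ insert p s → p = u ∨ (u ∈ s ∧ u ≠ p) := by
    rintro u (rfl | hu)
    · exact Or.inl rfl
    · exact Or.inr ⟨hu, fun h => hp (h ▸ hu)⟩
  rcases memcase y hy with rfl | ⟨hys, hyp⟩
  · -- y = p : need R (d p a) r
    rcases memcase x hx with rfl | ⟨hxs, hxp⟩
    · exact hxr
    rcases memcase z hz with rfl | ⟨hzs, hzp⟩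
    · exact hzr
    -- x, z ∈ s
    have hxc : le x c := (extOrd_up hxp).mp hxy
    have hcz : le c z ∧ z ≠ c := (extOrd_pu hzp).mp hyz
    rcases memcase a ha with rfl | ⟨has, hap⟩
    · -- a = p : goal R (d p p) r i.e. R ⊥ r
      rw [hself]
      exact h1 bot_le hxr
    · -- a ∈ s
      have hca : R (d c a) r := hconvR a has x hxs c hcs z hzs hxr hzr hxc hcz.1
      by_cases hR : R (d p x₀) r
      · refine h1 ?_ (h2 hR hca)
        exact (htri p c a).trans (max_le_max hpc le_rfl)
      · -- contradiction: z ∈ C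
        exfalso
        have hzc : d z c ≤ d p x₀ := by
          refine le_trans ?_ (h3 (h2 hzr hca) hR)
          refine (htri z a c).trans ?_
          rw [hsymm a c]
        have hzx₀ : d z x₀ ≤ d p x₀ := (htri z c x₀).trans (max_le hzc hcC)
        exact hcz.2 (hanti z hzs c hcs (hcmax z hzs hzx₀) hcz.1)
  · -- y ∈ s
    rcases memcase a ha with rfl | ⟨has, hap⟩
    · -- a = p
      rcases memcase x hx with rfl | ⟨hxs, hxp⟩
      · rcases memcase z hz with rfl | ⟨hzs, hzp⟩
        · -- x = z = p : contradiction
          exfalso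
          have h1' := (extOrd_pu hyp).mp hxy
          have h2' := (extOrd_up hyp).mp hyz
          exact h1'.2 (hanti y hys c hcs h2' h1'.1)
        · -- x = p, z ∈ s
          have hR : R (d p x₀) r := h1 ((hsymm p z) ▸ hmin z hzs) hzr
          have hcy := (extOrd_pu hyp).mp hxy
          have hyz' : le y z := (extOrd_uv hyp hzp).mp hyz
          have hx₀y : le x₀ y :=
            htrans x₀ hx₀ c hcs y hys
              (hcmax x₀ hx₀ (by rw [hself]; exact bot_le)) hcy.1
          have hzx₀ : R (d z x₀) r :=
            h1 ((htri z p x₀).trans le_rfl) (h2 hzr hR)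
          have hx₀x₀ : R (d x₀ x₀) r := by
            rw [hself]; exact h1 bot_le hR
          have hyx₀ : R (d y x₀) r :=
            hconvR x₀ hx₀ x₀ hx₀ y hys z hzs hx₀x₀ hzx₀ hx₀y hyz'
          refine h1 ?_ (h2 hyx₀ hR)
          refine (htri y x₀ p).trans ?_
          rw [hsymm x₀ p]
      · rcases memcase z hz with rfl | ⟨hzs, hzp⟩
        · -- x ∈ s, z = p
          have hR : R (d p x₀) r := h1 ((hsymm p x) ▸ hmin x hxs) hxr
          have hyc : le y c := (extOrd_up hyp).mp hyz
          have hxy' : le x y := (extOrd_uv hxp hyp).mp hxy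
          have hxx₀ : R (d x x₀) r :=
            h1 ((htri x p x₀).trans le_rfl) (h2 hxr hR)
          have hcx₀ : R (d c x₀) r := h1 hcC hR
          have hyx₀ : R (d y x₀) r :=
            hconvR x₀ hx₀ x hxs y hys c hcs hxx₀ hcx₀ hxy' hyc
          refine h1 ?_ (h2 hyx₀ hR)
          refine (htri y x₀ p).trans ?_
          rw [hsymm x₀ p]
        · -- x, z ∈ s
          have hR : R (d p x₀) r := h1 ((hsymm p x) ▸ hmin x hxs) hxr
          have hxx₀ : R (d x x₀) r :=
            h1 ((htri x p x₀).trans le_rfl) (h2 hxr hR)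
          have hzx₀ : R (d z x₀) r :=
            h1 ((htri z p x₀).trans le_rfl) (h2 hzr hR)
          have hyx₀ : R (d y x₀) r :=
            hconvR x₀ hx₀ x hxs y hys z hzs hxx₀ hzx₀
              ((extOrd_uv hxp hyp).mp hxy) ((extOrd_uv hyp hzp).mp hyz)
          refine h1 ?_ (h2 hyx₀ hR)
          refine (htri y x₀ p).trans ?_
          rw [hsymm x₀ p]
    · -- a ∈ s
      rcases memcase x hx with rfl | ⟨hxs, hxp⟩
      · rcases memcase z hz with rfl | ⟨hzs, hzp⟩
        · -- x = z = p : contradiction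
          exfalso
          have h1' := (extOrd_pu hyp).mp hxy
          have h2' := (extOrd_up hyp).mp hyz
          exact h1'.2 (hanti y hys c hcs h2' h1'.1)
        · -- x = p, z ∈ s
          have hR : R (d p x₀) r := h1 (hmin a has) hxr
          have hca : R (d c a) r := by
            refine h1 ?_ (h2 hR hxr)
            refine (htri c p a).trans ?_
            rw [hsymm c p]
            exact max_le_max hpc le_rfl
          have hcy := (extOrd_pu hyp).mp hxy
          exact hconvR a has c hcs y hys z hzs hca hzr hcy.1
            ((extOrd_uv hyp hzp).mp hyz)
      · rcases memcase z hz with rfl | ⟨hzs, hzp⟩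
        · -- x ∈ s, z = p
          have hR : R (d p x₀) r := h1 (hmin a has) hzr
          have hca : R (d c a) r := by
            refine h1 ?_ (h2 hR hzr)
            refine (htri c p a).trans ?_
            rw [hsymm c p]
            exact max_le_max hpc le_rfl
          exact hconvR a has x hxs y hys c hcs hxr hca
            ((extOrd_uv hxp hyp).mp hxy) ((extOrd_up hyp).mp hyz)
        · exact hconvR a has x hxs y hys z hzs hxr hzr
            ((extOrd_uv hxp hyp).mp hxy) ((extOrd_uv hyp hzp).mp hyz)

/-- Extending a convex linear order on `s` by one new point `p`. -/
lemma insert_step [Finite Y] (d : Y → Y → E) (hd : IsUltrametric d)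
    (s : Set Y) (p : Y) (hp : p ∉ s)
    (le : Y → Y → Prop) (hlin : IsLinearOrderOn s le) (hconv : IsConvexOn d s le) :
    ∃ le' : Y → Y → Prop,
      IsLinearOrderOn (insert p s) le' ∧
      (∀ x ∈ s, ∀ y ∈ s, (le x y ↔ le' x y)) ∧
      IsConvexOn d (insert p s) le' := by
  obtain ⟨heq, hsymm, htri⟩ := hd
  have hself : ∀ x, d x x = ⊥ := fun x => (heq x x).mpr rfl
  obtain ⟨hrefl, hanti, htrans, htot⟩ := hlin
  rcases s.eq_empty_or_nonempty with rfl | hsne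
  · refine ⟨fun _ _ => True, ⟨fun _ _ => trivial, ?_, fun _ _ _ _ _ _ _ _ => trivial,
      fun _ _ _ _ => Or.inl trivial⟩, by simp, ?_⟩
    · rintro x (rfl | hx) y (rfl | hy) _ _
      · rfl
      · exact absurd hy (Set.notMem_empty _)
      · exact absurd hx (Set.notMem_empty _)
      · exact absurd hx (Set.notMem_empty _)
    · intro a ha r
      constructor
      · rintro x (rfl | hx) y (rfl | hy) z hz hxr _ _ _
        · exact hxr
        · exact absurd hy (Set.notMem_empty _)
        · exact absurd hx (Set.notMem_empty _)
        · exact absurd hx (Set.notMem_empty _)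
      · rintro x (rfl | hx) y (rfl | hy) z hz hxr _ _ _
        · exact hxr
        · exact absurd hy (Set.notMem_empty _)
        · exact absurd hx (Set.notMem_empty _)
        · exact absurd hx (Set.notMem_empty _)
  · obtain ⟨x₀, hx₀, hmin⟩ := Set.exists_min_image s (fun x => d p x) s.toFinite hsne
    set C : Set Y := {x ∈ s | d x x₀ ≤ d p x₀} with hC
    have hCsub : C ⊆ s := fun x hx => hx.1
    have hCne : C.Nonempty := ⟨x₀, hx₀, by rw [hself]; exact bot_le⟩
    obtain ⟨c, hcC, hcmax'⟩ := exists_greatest hrefl htrans htot C (Set.toFinite C) hCsub hCne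
    have hcs : c ∈ s := hcC.1
    have hcmax : ∀ x ∈ s, d x x₀ ≤ d p x₀ → le x c := fun x hx h => hcmax' x ⟨hx, h⟩
    have memcase : ∀ u : Y, u ∈ insert p s → p = u ∨ (u ∈ s ∧ u ≠ p) := by
      rintro u (rfl | hu)
      · exact Or.inl rfl
      · exact Or.inr ⟨hu, fun h => hp (h ▸ hu)⟩
    refine ⟨extOrd le p c, ⟨?_, ?_, ?_, ?_⟩, ?_, ?_⟩
    · -- refl
      intro x hx
      rcases memcase x hx with rfl | ⟨hxs, hxp⟩
      · exact extOrd_pp le p c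
      · exact (extOrd_uv hxp hxp).mpr (hrefl x hxs)
    · -- antisymm
      intro x hx y hy hxy hyx
      rcases memcase x hx with rfl | ⟨hxs, hxp⟩ <;> rcases memcase y hy with rfl | ⟨hys, hyp⟩
      · rfl
      · exact absurd (hanti y hys c hcs ((extOrd_up hyp).mp hyx)
          ((extOrd_pu hyp).mp hxy).1) ((extOrd_pu hyp).mp hxy).2
      · exact absurd (hanti x hxs c hcs ((extOrd_up hxp).mp hxy)
          ((extOrd_pu hxp).mp hyx).1) ((extOrd_pu hxp).mp hyx).2
      · exact hanti x hxs y hys ((extOrd_uv hxp hyp).mp hxy) ((extOrd_uv hyp hxp).mp hyx)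
    · -- trans
      intro x hx y hy z hz hxy hyz
      rcases memcase x hx with rfl | ⟨hxs, hxp⟩ <;>
        rcases memcase y hy with rfl | ⟨hys, hyp⟩ <;>
        rcases memcase z hz with rfl | ⟨hzs, hzp⟩
      · exact extOrd_pp le p c
      · exact hyz
      · exact absurd (hanti y hys c hcs ((extOrd_up hyp).mp hyz)
          ((extOrd_pu hyp).mp hxy).1) ((extOrd_pu hyp).mp hxy).2
      · have h1 := (extOrd_pu hyp).mp hxy
        have h2 := (extOrd_uv hyp hzp).mp hyz
        refine (extOrd_pu hzp).mpr ⟨htrans c hcs y hys z hzs h1.1 h2, ?_⟩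
        rintro rfl
        exact h1.2 (hanti y hys z hzs h2 h1.1)
      · exact hxy
      · exact (extOrd_uv hxp hzp).mpr (htrans x hxs c hcs z hzs
          ((extOrd_up hxp).mp hxy) ((extOrd_pu hzp).mp hyz).1)
      · exact (extOrd_up hxp).mpr (htrans x hxs y hys c hcs
          ((extOrd_uv hxp hyp).mp hxy) ((extOrd_up hyp).mp hyz))
      · exact (extOrd_uv hxp hzp).mpr (htrans x hxs y hys z hzs
          ((extOrd_uv hxp hyp).mp hxy) ((extOrd_uv hyp hzp).mp hyz))
    · -- total
      intro x hx y hy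
      rcases memcase x hx with rfl | ⟨hxs, hxp⟩ <;> rcases memcase y hy with rfl | ⟨hys, hyp⟩
      · exact Or.inl (extOrd_pp le p c)
      · by_cases h : le y c
        · exact Or.inr ((extOrd_up hyp).mpr h)
        · rcases htot y hys c hcs with h' | h'
          · exact absurd h' h
          · refine Or.inl ((extOrd_pu hyp).mpr ⟨h', ?_⟩)
            rintro rfl
            exact h (hrefl y hys)
      · by_cases h : le x c
        · exact Or.inl ((extOrd_up hxp).mpr h)
        · rcases htot x hxs c hcs with h' | h'
          · exact absurd h' h
          · refine Or.inr ((extOrd_pu hxp).mpr ⟨h', ?_⟩)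
            rintro rfl
            exact h (hrefl x hxs)
      · rcases htot x hxs y hys with h | h
        · exact Or.inl ((extOrd_uv hxp hyp).mpr h)
        · exact Or.inr ((extOrd_uv hyp hxp).mpr h)
    · -- agreement
      intro x hx y hy
      have hxp : x ≠ p := fun h => hp (h ▸ hx)
      have hyp : y ≠ p := fun h => hp (h ▸ hy)
      exact (extOrd_uv hxp hyp).symm
    · -- convexity
      intro a ha r
      have hcx₀ : d c x₀ ≤ d p x₀ := hcC.2
      constructor
      · exact core_convex d hsymm htri hself s le hanti htrans p hp x₀ hx₀
          (fun x hx => hmin x hx) c hcs hcx₀ hcmax (fun e f => e < f)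
          (fun h h' => lt_of_le_of_lt h h') (fun h h' => max_lt h h')
          (fun h h' => le_of_lt (lt_of_lt_of_le h (not_lt.mp h'))) r
          (fun a' ha' => (hconv a' ha' r).1) a ha
      · exact core_convex d hsymm htri hself s le hanti htrans p hp x₀ hx₀
          (fun x hx => hmin x hx) c hcs hcx₀ hcmax (fun e f => e ≤ f)
          (fun h h' => le_trans h h') (fun h h' => max_le h h')
          (fun h h' => h.trans (not_le.mp h').le) r
          (fun a' ha' => (hconv a' ha' r).2) a ha

end aux

/-- Every convex linear order on a subspace `X` of a finite `E`-valued ultrametric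
space `Y` extends to a convex linear order on all of `Y`. -/
theorem stmt8 {Y E : Type*} [Finite Y] [LinearOrder E] [OrderBot E]
    (d : Y → Y → E) (hd : IsUltrametric d) (X : Set Y)
    (le : Y → Y → Prop) (hlin : IsLinearOrderOn X le) (hconv : IsConvexOn d X le) :
    ∃ le' : Y → Y → Prop,
      IsLinearOrderOn Set.univ le' ∧
      (∀ x ∈ X, ∀ y ∈ X, (le x y ↔ le' x y)) ∧
      IsConvexOn d Set.univ le' := by
  have key : ∀ t : Set Y, t.Finite →
      ∃ le' : Y → Y → Prop,
        IsLinearOrderOn (X ∪ t) le' ∧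
        (∀ x ∈ X, ∀ y ∈ X, (le x y ↔ le' x y)) ∧
        IsConvexOn d (X ∪ t) le' := by
    intro t ht
    refine Set.Finite.induction_on t ht ?_ ?_
    · rw [Set.union_empty]
      exact ⟨le, hlin, fun x _ y _ => Iff.rfl, hconv⟩
    · rintro a t' hat' ht' ⟨le₁, hlin₁, hagree₁, hconv₁⟩
      by_cases hmem : a ∈ X ∪ t'
      · rw [Set.union_insert, Set.insert_eq_self.mpr hmem]
        exact ⟨le₁, hlin₁, hagree₁, hconv₁⟩
      · obtain ⟨le₂, hlin₂, hagree₂, hconv₂⟩ :=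
          insert_step d hd (X ∪ t') a hmem le₁ hlin₁ hconv₁
        rw [Set.union_insert]
        refine ⟨le₂, hlin₂, ?_, hconv₂⟩
        intro x hx y hy
        exact (hagree₁ x hx y hy).trans
          (hagree₂ x (Set.mem_union_left _ hx) y (Set.mem_union_left _ hy))
  obtain ⟨le', h1, h2, h3⟩ := key Set.univ Set.finite_univ
  rw [Set.union_univ] at h1 h3
  exact ⟨le', h1, h2, h3⟩
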